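/- Let (Sₙ)_{n∈ℕ} be a sequence of games Sₙ = (Tₙ, Aₙ) with injective A-morphisms sₙ : Sₙ → S_{n+1} as connecting maps, and let (gₙ : Sₙ → G)_{n∈ℕ} be a cocone of A-morphisms into a game G = (T, A) (i.e., g_{n+1} ∘ sₙ = gₙ for all n). Then (gₙ) is a colimit cocone in Games_A if and only if every gₙ is injective and the family is jointly in E*, that is, T = ⋃ₙ gₙ[Tₙ] and A = ⋃ₙ ḡₙ[Aₙ]. -/

import Mathlib

universe u v w x y

namespace FraisseGames

/-- The initial segment (of length `n`) of an infinite sequence `R`. -/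
def runPrefix {M : Type u} (R : ℕ → M) (n : ℕ) : List M :=
  (List.range n).map R

/-- `T` is a game tree over `M`: it is closed under initial segments, and every
moment of `T` has a one-step extension in `T`. -/
def IsGameTree {M : Type u} (T : Set (List M)) : Prop :=
  (∀ t ∈ T, ∀ k : ℕ, t.take k ∈ T) ∧ ∀ t ∈ T, ∃ x : M, t ++ [x] ∈ T

/-- The set of runs of the tree `T`. -/
def Runs {M : Type u} (T : Set (List M)) : Set (ℕ → M) :=
  {R | ∀ n : ℕ, runPrefix R n ∈ T}

/-- A game over `M`: a game tree together with a payoff set of runs. -/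
structure Game (M : Type u) : Type u where
  tree : Set (List M)
  isGameTree : IsGameTree tree
  payoff : Set (ℕ → M)
  payoff_subset : payoff ⊆ Runs tree

/-- A game is finite if its set of runs is finite. -/
def Game.IsFin {M : Type u} (G : Game M) : Prop := (Runs G.tree).Finite

/-- The subgame relation `G ≤ G'`. -/
def Game.Sub {M : Type u} (G G' : Game M) : Prop :=
  G.tree ⊆ G'.tree ∧ G.payoff = G'.payoff ∩ Runs G.tree

/-- `f` is a chronological map from `T₁` to `T₂`: it maps `T₁` into `T₂` and it
preserves lengths and truncations of moments. -/
def Chronological {M₁ : Type u} {M₂ : Type v} (T₁ : Set (List M₁)) (T₂ : Set (List M₂))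
    (f : List M₁ → List M₂) : Prop :=
  (∀ t ∈ T₁, f t ∈ T₂) ∧ (∀ t ∈ T₁, (f t).length = t.length) ∧
    ∀ t ∈ T₁, ∀ k : ℕ, f (t.take k) = (f t).take k

/-- `BarMapsTo f R S` says that the map `f̄` on runs induced by the chronological
map `f` sends the run `R` to the run `S`, i.e. `S↾n = f (R↾n)` for all `n`. -/
def BarMapsTo {M₁ : Type u} {M₂ : Type v} (f : List M₁ → List M₂)
    (R : ℕ → M₁) (S : ℕ → M₂) : Prop :=
  ∀ n : ℕ, runPrefix S n = f (runPrefix R n)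

/-- `f` is an A-morphism from `G₁` to `G₂`: a chronological map whose induced map on
runs sends runs won by Ali to runs won by Ali. -/
def IsAMorphism {M₁ : Type u} {M₂ : Type v} (G₁ : Game M₁) (G₂ : Game M₂)
    (f : List M₁ → List M₂) : Prop :=
  Chronological G₁.tree G₂.tree f ∧
    ∀ R ∈ G₁.payoff, ∀ S : ℕ → M₂, BarMapsTo f R S → S ∈ G₂.payoff

/-- `f` is a game embedding from `G₁` to `G₂`: a chronological map, injective on the
tree, such that for every run `R` of `G₁`, `R ∈ A₁ ↔ f̄ R ∈ A₂`. -/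
def IsGameEmbedding {M₁ : Type u} {M₂ : Type v} (G₁ : Game M₁) (G₂ : Game M₂)
    (f : List M₁ → List M₂) : Prop :=
  Chronological G₁.tree G₂.tree f ∧
    (∀ t ∈ G₁.tree, ∀ s ∈ G₁.tree, f t = f s → t = s) ∧
    ∀ R ∈ Runs G₁.tree, ∀ S : ℕ → M₂, BarMapsTo f R S → (R ∈ G₁.payoff ↔ S ∈ G₂.payoff)

/-- `f` is an isomorphism of games from `G₁` onto `G₂`: a game embedding that is
surjective onto the tree of `G₂`. -/
def IsGameIso {M₁ : Type u} {M₂ : Type v} (G₁ : Game M₁) (G₂ : Game M₂)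
    (f : List M₁ → List M₂) : Prop :=
  IsGameEmbedding G₁ G₂ f ∧ ∀ s ∈ G₂.tree, ∃ t ∈ G₁.tree, f t = s

/-- The set of eventually-zero infinite sequences of natural numbers. -/
def c00 : Set (ℕ → ℕ) := {R | ∃ N : ℕ, ∀ n ≥ N, R n = 0}

/-- The game `G_FL = (ω^{<ω}, c₀₀)`. -/
def GFL : Game ℕ where
  tree := Set.univ
  isGameTree := ⟨fun _ _ _ => trivial, fun _ _ => ⟨0, trivial⟩⟩
  payoff := c00
  payoff_subset := fun _ _ _ => trivial

/-- The universal property of a colimit cocone in the category `Games_A` of games and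
A-morphisms: every cocone of A-morphisms over the sequence factors through `q`
via a unique (up to agreement on the tree) A-morphism.  (Morphisms of `Games_A` are
identified when they agree on the game tree.) -/
def IsGamesACoconeColimit.{u', v', w'} {MS : ℕ → Type u'} (S : ∀ n, Game (MS n))
    (s : ∀ n, List (MS n) → List (MS (n + 1)))
    {N : Type v'} (L : Game N) (q : ∀ n, List (MS n) → List N) : Prop :=
  ∀ (P : Type w') (H : Game P) (h : ∀ n, List (MS n) → List P),
    (∀ n, IsAMorphism (S n) H (h n)) →
    (∀ n, ∀ t ∈ (S n).tree, h (n + 1) (s n t) = h n t) →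
    ∃ k : List N → List P, IsAMorphism L H k ∧
      (∀ n, ∀ t ∈ (S n).tree, k (q n t) = h n t) ∧
      ∀ k' : List N → List P, IsAMorphism L H k' →
        (∀ n, ∀ t ∈ (S n).tree, k' (q n t) = h n t) →
        ∀ t ∈ L.tree, k' t = k t

/-!
Because the connecting maps are injective, two moments of the levels have the same image in the
direct limit exactly when they are carried (`push`) to the same moment of some common level; the
sets of moments meeting a given one (`colimClass`) form the alphabet of a colimit `colimGame`
living in the universe of the levels. If `G` is a colimit, its comparison map into `colimGame`
forces every `gₙ` to be injective and every won run of `G` to come from a won run of some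
level, while uniqueness of factorizations into the game where everything is allowed and won,
tested against the indicator of `⋃ₙ gₙ[Tₙ]`, forces `T` to be that union. Conversely, under
injectivity and joint surjectivity any cocone `hₙ` descends along the `gₙ`, since two preimages
of one moment meet at a common level.
-/

section PrefixMaps

variable {M M' X : Type*}

theorem runPrefix_length (R : ℕ → M) (n : ℕ) : (runPrefix R n).length = n := by
  simp [runPrefix]

theorem runPrefix_take (R : ℕ → M) {j n : ℕ} (h : j ≤ n) :
    (runPrefix R n).take j = runPrefix R j := by
  simp [runPrefix, ← List.map_take, List.take_range, h]

theorem getElem_runPrefix (R : ℕ → M) {n i : ℕ} (h : i < (runPrefix R n).length) :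
    (runPrefix R n)[i] = R i := by
  simp [runPrefix]

theorem exists_barMapsTo {T₁ : Set (List M)} {T₂ : Set (List X)} {f : List M → List X}
    (hf : Chronological T₁ T₂ f) {R : ℕ → M} (hR : R ∈ Runs T₁) : ∃ Z, BarMapsTo f R Z := by
  have hlen : ∀ n, (f (runPrefix R n)).length = n := fun n => by
    rw [hf.2.1 _ (hR n), runPrefix_length]
  refine ⟨fun n => (f (runPrefix R (n + 1)))[n]'(by rw [hlen]; omega), fun j => ?_⟩
  apply List.ext_getElem (by rw [runPrefix_length, hlen])
  intro i hi _
  have hij : i + 1 ≤ j := by rw [runPrefix_length] at hi; omega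
  have hprefix : f (runPrefix R (i + 1)) = (f (runPrefix R j)).take (i + 1) := by
    rw [← hf.2.2 _ (hR j), runPrefix_take R hij]
  rw [getElem_runPrefix]
  simp only [hprefix, List.getElem_take]

def prefMap (e : List M → X) (t : List M) : List X :=
  (List.range t.length).map fun i => e (t.take (i + 1))

theorem prefMap_length (e : List M → X) (t : List M) : (prefMap e t).length = t.length := by
  simp [prefMap]

theorem prefMap_take (e : List M → X) (t : List M) (j : ℕ) :
    prefMap e (t.take j) = (prefMap e t).take j := by
  simp only [prefMap, List.length_take, ← List.map_take, List.take_range, List.take_take]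
  refine List.map_congr_left fun i hi => ?_
  rw [List.mem_range] at hi
  congr 2
  omega

theorem prefMap_append_singleton (e : List M → X) (t : List M) (x : M) :
    prefMap e (t ++ [x]) = prefMap e t ++ [e (t ++ [x])] := by
  simp only [prefMap, List.length_append, List.length_singleton, List.range_succ,
    List.map_append, List.map_singleton, List.take_length_add_append]
  congr 1
  refine List.map_congr_left fun i hi => ?_
  rw [List.take_append_of_le_length (by rw [List.mem_range] at hi; omega)]

theorem prefMap_congr {e e' : List M → X} {t : List M} (h : ∀ k, e (t.take k) = e' (t.take k)) :
    prefMap e t = prefMap e' t :=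
  List.map_congr_left fun i _ => h (i + 1)

theorem apply_eq_of_prefMap_eq {e : List M → X} {e' : List M' → X} {t : List M} {t' : List M'}
    (ht : t ≠ []) (h : prefMap e t = prefMap e' t') : e t = e' t' := by
  obtain ⟨t₀, x, rfl⟩ := (List.eq_nil_or_concat t).resolve_left ht
  have hlen : t'.length = t₀.length + 1 := by
    simpa [prefMap_length] using congrArg List.length h.symm
  obtain ⟨t₀', x', rfl⟩ := (List.eq_nil_or_concat t').resolve_left
    (List.ne_nil_of_length_eq_add_one hlen)
  simp only [List.concat_eq_append, prefMap_append_singleton] at h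
  simpa using (List.append_inj' h rfl).2

theorem prefMap_comp {T₁ : Set (List M)} {T₂ : Set (List M')} {f : List M → List M'}
    (hf : Chronological T₁ T₂ f) (e : List M' → X) {t : List M} (ht : t ∈ T₁) :
    prefMap e (f t) = prefMap (e ∘ f) t := by
  simp only [prefMap, hf.2.1 t ht, Function.comp, hf.2.2 t ht]

theorem chronological_prefMap {T₁ : Set (List M)} {T₂ : Set (List X)} (e : List M → X)
    (h : ∀ t ∈ T₁, prefMap e t ∈ T₂) : Chronological T₁ T₂ (prefMap e) :=
  ⟨h, fun t _ => prefMap_length e t, fun t _ k => prefMap_take e t k⟩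

def fullGame (X : Type*) [Inhabited X] : Game X where
  tree := Set.univ
  isGameTree := ⟨fun _ _ _ => trivial, fun _ _ => ⟨default, trivial⟩⟩
  payoff := Set.univ
  payoff_subset := fun _ _ _ => trivial

theorem isAMorphism_prefMap_fullGame [Inhabited X] (G : Game M) (e : List M → X) :
    IsAMorphism G (fullGame X) (prefMap e) :=
  ⟨chronological_prefMap e fun _ _ => trivial, fun _ _ _ _ => trivial⟩

end PrefixMaps

section DirectedSystem

variable {MS : ℕ → Type*} (s : ∀ n, List (MS n) → List (MS (n + 1)))

/-- `push s p n` carries a moment `p` of level `m` up to level `n` along the connecting maps;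
it is meaningful only for `m ≤ n`. -/
def push {m : ℕ} (p : List (MS m)) : (n : ℕ) → List (MS n)
  | 0 => if h : m = 0 then h ▸ p else []
  | n + 1 => if h : m = n + 1 then h ▸ p else s n (push p n)

variable {s}

@[simp]
theorem push_self {m : ℕ} (p : List (MS m)) : push s p m = p := by
  cases m <;> simp [push]

theorem push_succ {m n : ℕ} (p : List (MS m)) (h : m ≤ n) :
    push s p (n + 1) = s n (push s p n) := by
  simp [push, show m ≠ n + 1 by omega]

theorem push_apply {n l : ℕ} (p : List (MS n)) (h : n + 1 ≤ l) :
    push s (s n p) l = push s p l := by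
  induction l, h using Nat.le_induction with
  | base => rw [push_self, push_succ p le_rfl, push_self]
  | succ l hl ih => rw [push_succ _ hl, push_succ _ (by omega), ih]

variable {T : ∀ n, Set (List (MS n))}

theorem push_mem (hs : ∀ n, ∀ t ∈ T n, s n t ∈ T (n + 1)) {m n : ℕ} {p : List (MS m)}
    (hp : p ∈ T m) (h : m ≤ n) : push s p n ∈ T n := by
  induction n, h using Nat.le_induction with
  | base => rwa [push_self]
  | succ n hn ih => rw [push_succ p hn]; exact hs n _ ih

theorem apply_push {X : Type*} {f : ∀ n, List (MS n) → X}
    (hs : ∀ n, ∀ t ∈ T n, s n t ∈ T (n + 1)) (hf : ∀ n, ∀ t ∈ T n, f (n + 1) (s n t) = f n t)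
    {m n : ℕ} {p : List (MS m)} (hp : p ∈ T m) (h : m ≤ n) : f n (push s p n) = f m p := by
  induction n, h using Nat.le_induction with
  | base => rw [push_self]
  | succ n hn ih => rw [push_succ p hn, hf n _ (push_mem hs hp hn), ih]

theorem push_injOn (hs : ∀ n, ∀ t ∈ T n, s n t ∈ T (n + 1))
    (hsinj : ∀ n, ∀ t ∈ T n, ∀ t' ∈ T n, s n t = s n t' → t = t')
    {m n : ℕ} {p p' : List (MS m)} (hp : p ∈ T m) (hp' : p' ∈ T m) (h : m ≤ n)
    (he : push s p n = push s p' n) : p = p' := by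
  induction n, h using Nat.le_induction with
  | base => simpa using he
  | succ n hn ih =>
    rw [push_succ p hn, push_succ p' hn] at he
    exact ih (hsinj n _ (push_mem hs hp hn) _ (push_mem hs hp' hn) he)

variable (s) in
/-- The class of `p` in the direct limit of the levels, encoded as the set of all moments that
eventually meet `p`; this keeps the colimit alphabet in the universe of the levels. -/
def colimClass (n : ℕ) (p : List (MS n)) : Set ((m : ℕ) × List (MS m)) :=
  {q | ∃ l, q.1 ≤ l ∧ n ≤ l ∧ push s q.2 l = push s p l}

theorem mem_colimClass_self (n : ℕ) (p : List (MS n)) : ⟨n, p⟩ ∈ colimClass s n p :=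
  ⟨n, le_rfl, le_rfl, rfl⟩

theorem colimClass_succ (n : ℕ) (p : List (MS n)) : colimClass s (n + 1) (s n p) = colimClass s n p := by
  ext ⟨m, q⟩
  constructor
  · rintro ⟨l, hml, hnl, hl⟩
    exact ⟨l, hml, by omega, hl.trans (push_apply p hnl)⟩
  · rintro ⟨l, hml, hnl, hl⟩
    refine ⟨l + 1, by omega, by omega, ?_⟩
    rw [push_apply p (by omega), push_succ q hml, push_succ p hnl, hl]

variable (s) in
def colimMap (n : ℕ) : List (MS n) → List (Set ((m : ℕ) × List (MS m))) :=
  prefMap (colimClass s n)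

theorem colimMap_succ (hs : ∀ n, Chronological (T n) (T (n + 1)) (s n)) {n : ℕ} {t : List (MS n)}
    (ht : t ∈ T n) : colimMap s (n + 1) (s n t) = colimMap s n t := by
  rw [colimMap, prefMap_comp (hs n) _ ht]
  exact congrArg (prefMap · t) (funext (colimClass_succ n))

theorem exists_push_eq_of_colimMap_eq {m n : ℕ} {u : List (MS m)} {v : List (MS n)}
    (hu : u ≠ []) (h : colimMap s m u = colimMap s n v) :
    ∃ l, m ≤ l ∧ n ≤ l ∧ push s u l = push s v l := by
  have hclass : colimClass s m u = colimClass s n v := apply_eq_of_prefMap_eq hu h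
  have hmem : (⟨m, u⟩ : (k : ℕ) × List (MS k)) ∈ colimClass s n v :=
    hclass ▸ mem_colimClass_self m u
  exact hmem

theorem apply_eq_of_colimMap_eq {X : Type*} {f : ∀ n, List (MS n) → List X}
    (hs : ∀ n, Chronological (T n) (T (n + 1)) (s n))
    (hf : ∀ n, ∀ t ∈ T n, (f n t).length = t.length)
    (hcocone : ∀ n, ∀ t ∈ T n, f (n + 1) (s n t) = f n t)
    {m n : ℕ} {u : List (MS m)} {v : List (MS n)} (hu : u ∈ T m) (hv : v ∈ T n)
    (h : colimMap s m u = colimMap s n v) : f m u = f n v := by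
  rcases eq_or_ne u [] with rfl | hne
  · have hv0 : v = [] := by
      simpa [colimMap, prefMap_length] using (congrArg List.length h).symm
    subst hv0
    rw [List.eq_nil_of_length_eq_zero (hf m [] hu), List.eq_nil_of_length_eq_zero (hf n [] hv)]
  obtain ⟨l, hml, hnl, hl⟩ := exists_push_eq_of_colimMap_eq hne h
  have hsT : ∀ n, ∀ t ∈ T n, s n t ∈ T (n + 1) := fun n => (hs n).1
  rw [← apply_push hsT hcocone hu hml, hl, apply_push hsT hcocone hv hnl]

end DirectedSystem

section Colimit

variable {MS : ℕ → Type u} {S : ∀ n, Game (MS n)} {s : ∀ n, List (MS n) → List (MS (n + 1))}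
  {N : Type v} {G : Game N} {g : ∀ n, List (MS n) → List N}

variable (S s) in
def colimGame : Game (Set ((m : ℕ) × List (MS m))) where
  tree := ⋃ n, colimMap s n '' (S n).tree
  isGameTree := by
    constructor
    · rintro _ ⟨_, ⟨n, rfl⟩, t, ht, rfl⟩ k
      exact Set.mem_iUnion.2 ⟨n, t.take k, (S n).isGameTree.1 t ht k, prefMap_take _ t k⟩
    · rintro _ ⟨_, ⟨n, rfl⟩, t, ht, rfl⟩
      obtain ⟨x, hx⟩ := (S n).isGameTree.2 t ht
      exact ⟨_, Set.mem_iUnion.2 ⟨n, t ++ [x], hx, prefMap_append_singleton _ t x⟩⟩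
  payoff := {Z | ∃ n, ∃ R ∈ (S n).payoff, BarMapsTo (colimMap s n) R Z}
  payoff_subset := by
    rintro _ ⟨n, R, hR, hRZ⟩ j
    rw [hRZ j]
    exact Set.mem_iUnion.2 ⟨n, _, (S n).payoff_subset hR j, rfl⟩

theorem isAMorphism_colimMap (n : ℕ) : IsAMorphism (S n) (colimGame S s) (colimMap s n) :=
  ⟨chronological_prefMap _ fun t ht => Set.mem_iUnion.2 ⟨n, t, ht, rfl⟩,
    fun R hR _ hRZ => ⟨n, R, hR, hRZ⟩⟩

theorem injOn_of_isColimit (hs : ∀ n, Chronological (S n).tree (S (n + 1)).tree (s n))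
    (hsinj : ∀ n, ∀ t ∈ (S n).tree, ∀ t' ∈ (S n).tree, s n t = s n t' → t = t')
    (colim : IsGamesACoconeColimit.{u, v, u} S s G g) :
    ∀ n, ∀ t ∈ (S n).tree, ∀ t' ∈ (S n).tree, g n t = g n t' → t = t' := by
  obtain ⟨k, -, hkg, -⟩ := colim _ (colimGame S s) (colimMap s) isAMorphism_colimMap
    fun n t ht => colimMap_succ hs ht
  intro n t ht t' ht' he
  have hcolim : colimMap s n t = colimMap s n t' := by rw [← hkg n t ht, ← hkg n t' ht', he]
  rcases eq_or_ne t [] with rfl | hne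
  · simpa [colimMap, prefMap_length, eq_comm] using congrArg List.length hcolim
  obtain ⟨l, hnl, -, hl⟩ := exists_push_eq_of_colimMap_eq hne hcolim
  exact push_injOn (fun n => (hs n).1) hsinj ht ht' hnl hl

theorem tree_eq_iUnion_of_isColimit (hs : ∀ n, Chronological (S n).tree (S (n + 1)).tree (s n))
    (hg : ∀ n, Chronological (S n).tree G.tree (g n))
    (colim : IsGamesACoconeColimit.{u, v, u} S s G g) :
    G.tree = ⋃ n, g n '' (S n).tree := by
  set D := ⋃ n, g n '' (S n).tree
  have hgD : ∀ n, ∀ t ∈ (S n).tree, g n t ∈ D := fun n t ht => Set.mem_iUnion.2 ⟨n, t, ht, rfl⟩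
  -- Both `prefMap inD` and `prefMap yes` factor the constant cocone, so they agree on `G.tree`.
  let inD : List N → ULift.{u} Prop := fun p => ULift.up (p ∈ D)
  let yes : List N → ULift.{u} Prop := fun _ => ULift.up True
  have hfactor : ∀ e : List N → ULift.{u} Prop, (∀ p ∈ D, e p = ULift.up True) →
      ∀ n, ∀ t ∈ (S n).tree, prefMap e (g n t) = prefMap (fun _ => ULift.up True) t :=
    fun e he n t ht => (prefMap_comp (hg n) e ht).trans
      (prefMap_congr fun k => he _ (hgD n _ ((S n).isGameTree.1 t ht k)))
  obtain ⟨_, -, -, huniq⟩ := colim _ (fullGame _) (fun _ => prefMap fun _ => ULift.up True)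
    (fun n => isAMorphism_prefMap_fullGame _ _)
    fun n t ht => (prefMap_comp (hs n) _ ht).trans rfl
  have hagree : ∀ t ∈ G.tree, prefMap inD t = prefMap yes t := fun t ht =>
    (huniq _ (isAMorphism_prefMap_fullGame _ _) (hfactor inD fun p hp => by simp [inD, hp]) t ht).trans
      (huniq _ (isAMorphism_prefMap_fullGame _ _) (hfactor yes fun _ _ => rfl) t ht).symm
  have hne : ∀ t ∈ G.tree, t ≠ [] → t ∈ D := fun t ht hne => by
    simpa [inD, yes] using apply_eq_of_prefMap_eq hne (hagree t ht)
  refine Set.Subset.antisymm (fun t ht => ?_) (Set.iUnion_subset fun n => ?_)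
  · rcases eq_or_ne t [] with rfl | htne
    · obtain ⟨x, hx⟩ := G.isGameTree.2 [] ht
      obtain ⟨_, ⟨n, rfl⟩, u, hu, hux⟩ := hne _ hx (List.cons_ne_nil x [])
      have : g n (u.take 0) = [] := by rw [(hg n).2.2 u hu, hux]; rfl
      exact this ▸ hgD n _ ((S n).isGameTree.1 u hu 0)
    · exact hne t ht htne
  · rintro _ ⟨u, hu, rfl⟩
    exact (hg n).1 u hu

theorem payoff_eq_of_isColimit (hs : ∀ n, Chronological (S n).tree (S (n + 1)).tree (s n))
    (hg : ∀ n, IsAMorphism (S n) G (g n))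
    (hcocone : ∀ n, ∀ t ∈ (S n).tree, g (n + 1) (s n t) = g n t)
    (colim : IsGamesACoconeColimit.{u, v, u} S s G g) (htree : G.tree = ⋃ n, g n '' (S n).tree) :
    G.payoff = {Z : ℕ → N | ∃ n, ∃ R ∈ (S n).payoff, BarMapsTo (g n) R Z} := by
  obtain ⟨k, hk, hkg, -⟩ := colim _ (colimGame S s) (colimMap s) isAMorphism_colimMap
    fun n t ht => colimMap_succ hs ht
  ext Z
  refine ⟨fun hZ => ?_, fun ⟨n, R, hR, hRZ⟩ => (hg n).2 R hR Z hRZ⟩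
  obtain ⟨W, hZW⟩ := exists_barMapsTo hk.1 (G.payoff_subset hZ)
  obtain ⟨n, R, hR, hRW⟩ := hk.2 Z hZ W hZW
  refine ⟨n, R, hR, fun j => ?_⟩
  have hZj := G.payoff_subset hZ j
  rw [htree] at hZj
  obtain ⟨_, ⟨m, rfl⟩, u, hu, hZj⟩ := hZj
  rw [← hZj]
  refine apply_eq_of_colimMap_eq hs (fun n => (hg n).1.2.1) hcocone hu
    ((S n).payoff_subset hR j) ?_
  rw [← hkg m u hu, hZj, ← hZW j, hRW j]

theorem factorsThrough_of_injOn {P : Type w} {h : ∀ n, List (MS n) → P}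
    (hs : ∀ n, ∀ t ∈ (S n).tree, s n t ∈ (S (n + 1)).tree)
    (hcocone : ∀ n, ∀ t ∈ (S n).tree, g (n + 1) (s n t) = g n t)
    (hh : ∀ n, ∀ t ∈ (S n).tree, h (n + 1) (s n t) = h n t)
    (ginj : ∀ n, ∀ t ∈ (S n).tree, ∀ t' ∈ (S n).tree, g n t = g n t' → t = t') :
    Function.FactorsThrough (fun x : (n : ℕ) × (S n).tree => h x.1 x.2)
      (fun x => g x.1 x.2) := by
  have hle : ∀ m n (u : List (MS m)) (v : List (MS n)), u ∈ (S m).tree → v ∈ (S n).tree →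
      m ≤ n → g m u = g n v → h m u = h n v := fun m n u v hu hv hmn he => by
    have hpush : push s u n = v :=
      ginj n _ (push_mem hs hu hmn) v hv ((apply_push hs hcocone hu hmn).trans he)
    rw [← hpush, apply_push hs hh hu hmn]
  rintro ⟨m, u, hu⟩ ⟨n, v, hv⟩ (he : g m u = g n v)
  rcases le_total m n with hmn | hnm
  · exact hle m n u v hu hv hmn he
  · exact (hle n m v u hv hu hnm he.symm).symm

theorem isColimit_of_injOn_of_eq_iUnion (hs : ∀ n, IsAMorphism (S n) (S (n + 1)) (s n))
    (hg : ∀ n, IsAMorphism (S n) G (g n))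
    (hcocone : ∀ n, ∀ t ∈ (S n).tree, g (n + 1) (s n t) = g n t)
    (ginj : ∀ n, ∀ t ∈ (S n).tree, ∀ t' ∈ (S n).tree, g n t = g n t' → t = t')
    (htree : G.tree = ⋃ n, g n '' (S n).tree)
    (hpay : G.payoff = {Z : ℕ → N | ∃ n, ∃ R ∈ (S n).payoff, BarMapsTo (g n) R Z}) :
    IsGamesACoconeColimit.{u, v, w} S s G g := by
  intro P H h hh hhs
  have hfac := factorsThrough_of_injOn (fun n => (hs n).1.1) hcocone hhs ginj
  set k := Function.extend (fun x : (n : ℕ) × (S n).tree => g x.1 x.2)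
    (fun x => h x.1 x.2) fun _ => []
  have hkg : ∀ n, ∀ t ∈ (S n).tree, k (g n t) = h n t := fun n t ht =>
    hfac.extend_apply _ ⟨n, t, ht⟩
  have hcover : ∀ t ∈ G.tree, ∃ n, ∃ u ∈ (S n).tree, g n u = t := fun t ht => by
    rw [htree] at ht
    obtain ⟨_, ⟨n, rfl⟩, u, hu, rfl⟩ := ht
    exact ⟨n, u, hu, rfl⟩
  refine ⟨k, ⟨⟨fun t ht => ?_, fun t ht => ?_, fun t ht j => ?_⟩, fun R hR Z hRZ => ?_⟩,
    hkg, fun k' _ hk'g t ht => ?_⟩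
  · obtain ⟨n, u, hu, rfl⟩ := hcover t ht
    exact hkg n u hu ▸ (hh n).1.1 u hu
  · obtain ⟨n, u, hu, rfl⟩ := hcover t ht
    rw [hkg n u hu, (hh n).1.2.1 u hu, (hg n).1.2.1 u hu]
  · obtain ⟨n, u, hu, rfl⟩ := hcover t ht
    rw [hkg n u hu, ← (hg n).1.2.2 u hu, hkg n _ ((S n).isGameTree.1 u hu j), (hh n).1.2.2 u hu]
  · rw [hpay] at hR
    obtain ⟨n, R', hR', hR'R⟩ := hR
    refine (hh n).2 R' hR' Z fun j => ?_
    rw [hRZ j, hR'R j, hkg n _ ((S n).payoff_subset hR' j)]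
  · obtain ⟨n, u, hu, rfl⟩ := hcover t ht
    rw [hk'g n u hu, hkg n u hu]

end Colimit

/-- a cocone of A-morphisms over a sequence of games with injective
connecting A-morphisms is a colimit cocone in `Games_A` iff its components are
injective and the family is jointly in `E*`, i.e. `T = ⋃ₙ gₙ[Tₙ]` and
`A = ⋃ₙ ḡₙ[Aₙ]`. -/
theorem gamesA_colimit_iff_jointly_Estar {MS : ℕ → Type u}
    (S : ∀ n, Game (MS n)) (s : ∀ n, List (MS n) → List (MS (n + 1)))
    (hs : ∀ n, IsAMorphism (S n) (S (n + 1)) (s n))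
    (hsinj : ∀ n, ∀ t ∈ (S n).tree, ∀ t' ∈ (S n).tree, s n t = s n t' → t = t')
    {N : Type v} (G : Game N) (g : ∀ n, List (MS n) → List N)
    (hg : ∀ n, IsAMorphism (S n) G (g n))
    (hcocone : ∀ n, ∀ t ∈ (S n).tree, g (n + 1) (s n t) = g n t) :
    IsGamesACoconeColimit.{u, v, u} S s G g ↔
      ((∀ n, ∀ t ∈ (S n).tree, ∀ t' ∈ (S n).tree, g n t = g n t' → t = t') ∧
        G.tree = ⋃ n, g n '' (S n).tree ∧
        G.payoff = {Z : ℕ → N | ∃ n, ∃ R ∈ (S n).payoff, BarMapsTo (g n) R Z}) := by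
  have hsc : ∀ n, Chronological (S n).tree (S (n + 1)).tree (s n) := fun n => (hs n).1
  refine ⟨fun colim => ?_, fun ⟨ginj, htree, hpay⟩ =>
    isColimit_of_injOn_of_eq_iUnion hs hg hcocone ginj htree hpay⟩
  have htree := tree_eq_iUnion_of_isColimit hsc (fun n => (hg n).1) colim
  exact ⟨injOn_of_isColimit hsc hsinj colim, htree,
    payoff_eq_of_isColimit hsc hg hcocone colim htree⟩

end FraisseGames
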